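/- Let λ, μ, γ be real numbers with λ + μ + γ ≠ 0, and let M(λ,μ,γ) be the 3×3 real matrix whose rows are (λ,λ,λ), (μ,μ,μ), (γ,γ,γ). If one of the following holds: (1) λ = 0 and μγ < 0; (2) μ = 0 and λγ < 0; (3) γ = 0 and λμ < 0; then the evolution algebra E_{M(λ,μ,γ)} is isomorphic to the evolution algebra E₆ whose structure matrix has rows (1,0,0), (0,0,0), (−1,0,0). -/
import Mathlib


/-- Evolution algebra multiplication on ℝ³ determined by a structure matrix `A`:
`(x ∗_A y) j = ∑ i, x i * y i * A i j`. -/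
def evolMul (A : Matrix (Fin 3) (Fin 3) ℝ) (x y : Fin 3 → ℝ) : Fin 3 → ℝ :=
  fun j => ∑ i, x i * y i * A i j

/-- The evolution algebras with structure matrices `A` and `B` are isomorphic:
there is an ℝ-linear equivalence of ℝ³ intertwining the two multiplications. -/
def EvolIso (A B : Matrix (Fin 3) (Fin 3) ℝ) : Prop :=
  ∃ f : (Fin 3 → ℝ) ≃ₗ[ℝ] (Fin 3 → ℝ),
    ∀ x y, f (evolMul A x y) = evolMul B (f x) (f y)

/-- If an invertible matrix `P` intertwines the two evolution multiplications via `mulVec`,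
then the evolution algebras are isomorphic. -/
lemma evolIso_of_matrix (A B P : Matrix (Fin 3) (Fin 3) ℝ) (hdet : IsUnit P.det)
    (h : ∀ x y, P.mulVec (evolMul A x y) = evolMul B (P.mulVec x) (P.mulVec y)) :
    EvolIso A B := by
  refine ⟨P.toLinearEquiv' (P.invertibleOfIsUnitDet hdet), ?_⟩
  intro x y
  simpa [Matrix.toLinearEquiv', Matrix.toLin'_apply] using h x y

theorem stmt (l m g : ℝ) (hsum : l + m + g ≠ 0)
    (h : (l = 0 ∧ m * g < 0) ∨ (m = 0 ∧ l * g < 0) ∨ (g = 0 ∧ l * m < 0)) :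
    EvolIso (!![l, l, l; m, m, m; g, g, g] : Matrix (Fin 3) (Fin 3) ℝ) (!![1, 0, 0; 0, 0, 0; -1, 0, 0] : Matrix (Fin 3) (Fin 3) ℝ) := by
  rcases h with ⟨h0, hprod⟩ | ⟨h0, hprod⟩ | ⟨h0, hprod⟩
  · -- l = 0, m * g < 0
    subst h0
    have hs : Real.sqrt (-(m*g)) * Real.sqrt (-(m*g)) = -(m*g) :=
      Real.mul_self_sqrt (by linarith)
    have hs0 : (0:ℝ) < Real.sqrt (-(m*g)) := Real.sqrt_pos.mpr (by linarith)
    refine evolIso_of_matrix _ _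
      (!![0, m, g; 1, -1, 0; 0, Real.sqrt (-(m*g)), -Real.sqrt (-(m*g))]) ?_ ?_
    · rw [isUnit_iff_ne_zero,
        show (!![0, m, g; 1, -1, 0; 0, Real.sqrt (-(m*g)), -Real.sqrt (-(m*g))]
          : Matrix (Fin 3) (Fin 3) ℝ).det = Real.sqrt (-(m*g)) * (m + g) from by
            simp [Matrix.det_fin_three]; ring]
      exact mul_ne_zero hs0.ne' (fun hc => hsum (by linarith))
    · intro x y
      funext j
      fin_cases j <;>
        simp [evolMul, Matrix.mulVec, dotProduct, Fin.sum_univ_three] <;>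
        (first
          | ring1
          | linear_combination (x 1 - x 2) * (y 1 - y 2) * hs)
  · -- m = 0, l * g < 0
    subst h0
    have hs : Real.sqrt (-(l*g)) * Real.sqrt (-(l*g)) = -(l*g) :=
      Real.mul_self_sqrt (by linarith)
    have hs0 : (0:ℝ) < Real.sqrt (-(l*g)) := Real.sqrt_pos.mpr (by linarith)
    refine evolIso_of_matrix _ _
      (!![l, 0, g; 0, 1, -1; Real.sqrt (-(l*g)), 0, -Real.sqrt (-(l*g))]) ?_ ?_
    · rw [isUnit_iff_ne_zero,
        show (!![l, 0, g; 0, 1, -1; Real.sqrt (-(l*g)), 0, -Real.sqrt (-(l*g))]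
          : Matrix (Fin 3) (Fin 3) ℝ).det = -(Real.sqrt (-(l*g)) * (l + g)) from by
            simp [Matrix.det_fin_three]; ring]
      exact neg_ne_zero.mpr (mul_ne_zero hs0.ne' (fun hc => hsum (by linarith)))
    · intro x y
      funext j
      fin_cases j <;>
        simp [evolMul, Matrix.mulVec, dotProduct, Fin.sum_univ_three] <;>
        (first
          | ring1
          | linear_combination (x 0 - x 2) * (y 0 - y 2) * hs)
  · -- g = 0, l * m < 0
    subst h0
    have hs : Real.sqrt (-(l*m)) * Real.sqrt (-(l*m)) = -(l*m) :=
      Real.mul_self_sqrt (by linarith)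
    have hs0 : (0:ℝ) < Real.sqrt (-(l*m)) := Real.sqrt_pos.mpr (by linarith)
    refine evolIso_of_matrix _ _
      (!![l, m, 0; 0, 1, -1; Real.sqrt (-(l*m)), -Real.sqrt (-(l*m)), 0]) ?_ ?_
    · rw [isUnit_iff_ne_zero,
        show (!![l, m, 0; 0, 1, -1; Real.sqrt (-(l*m)), -Real.sqrt (-(l*m)), 0]
          : Matrix (Fin 3) (Fin 3) ℝ).det = -(Real.sqrt (-(l*m)) * (l + m)) from by
            simp [Matrix.det_fin_three]; ring]
      exact neg_ne_zero.mpr (mul_ne_zero hs0.ne' (fun hc => hsum (by linarith)))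
    · intro x y
      funext j
      fin_cases j <;>
        simp [evolMul, Matrix.mulVec, dotProduct, Fin.sum_univ_three] <;>
        (first
          | ring1
          | linear_combination (x 0 - x 1) * (y 0 - y 1) * hs)
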